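/- arXiv:1212.0048 — 2 statements merged into one kernel-verified Lean document; each statement's English description precedes it below -/
import Mathlib

section
/- Assume p = 2. Then for every integer U ≥ 1, W(qU) ≥ W(qU+1) ≥ W(qU−1); moreover, for every nonnegative integer U and every integer r with 0 ≤ r < q−1, W(qU+r) ≥ W(qU+r+1). -/
/-- A strictly chained `(p,q)`-ary partition of `U`: a finite strictly decreasing
list of positive integers of the form `p^a * q^b`, each part divisible by the next,
summing to `U`. -/
def IsSCPartition (p q U : ℕ) (l : List ℕ) : Prop :=
  (∀ x ∈ l, ∃ a b : ℕ, x = p ^ a * q ^ b) ∧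
  List.Chain' (fun x y => y ∣ x ∧ y < x) l ∧
  l.sum = U

/-- The set of strictly chained `(p,q)`-ary partitions of `U`. -/
def Omega (p q U : ℕ) : Set (List ℕ) := {l | IsSCPartition p q U l}

/-- The subset of `Omega p q U` of partitions with no part equal to `1`. -/
def OmegaStar (p q U : ℕ) : Set (List ℕ) := {l | IsSCPartition p q U l ∧ 1 ∉ l}

/-- `W p q U` is the number of strictly chained `(p,q)`-ary partitions of `U`. -/
noncomputable def W (p q U : ℕ) : ℕ := (Omega p q U).ncard

/-- `Wstar p q U` is the number of strictly chained `(p,q)`-ary partitions of `U`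
with no part equal to `1`. -/
noncomputable def Wstar (p q U : ℕ) : ℕ := (OmegaStar p q U).ncard

/-!
For odd `q`, the parts of a strictly chained `(2,q)`-ary partition of `n` that are not multiples
of `q` are powers of two forming its tail, hence the binary expansion of what the multiples of `q`
leave over. So `W 2 q n` counts the chains `m` of multiples of `q` with `m.sum ≤ n` whose last
part `u` satisfies `n - m.sum < 2 ^ (ν₂ u + 1)`, with `ν₂` the 2-adic valuation. When `q ∤ n + 1`
we have `m.sum ≠ n + 1`, so every such chain for `n + 1` is one for `n`. When `q ∣ n + 1`, a
chain for `n` fails for `n + 2` only if `n - m.sum = 2 ^ (ν₂ u + 1) - 2`; appending `q` times the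
binary expansion of `(2 ^ (ν₂ u + 1) - 1) / q` maps these chains injectively (by a parity
argument) to chains of sum `n + 1`, which count for `n + 2` but not for `n`.
-/

instance : IsTrans ℕ fun x y : ℕ => y ∣ x ∧ y < x :=
  ⟨fun _ _ _ hxy hyz => ⟨hyz.1.trans hxy.1, hyz.2.trans hxy.2⟩⟩

theorem sum_lt_two_mul_of_isChain {y : ℕ} {l : List ℕ}
    (h : (y :: l).IsChain fun x y => y ∣ x ∧ y < x) (hy : 0 < y) : (y :: l).sum < 2 * y := by
  induction l generalizing y with
  | nil => simp only [List.sum_cons, List.sum_nil]; omega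
  | cons z l ih =>
    obtain ⟨⟨hzy, hlt⟩, hl⟩ := List.isChain_cons_cons.mp h
    have hsum := ih hl (Nat.pos_of_dvd_of_pos hzy hy)
    have h2z : 2 * z ≤ y := by
      by_contra! h
      exact hlt.ne' (Nat.eq_of_dvd_of_lt_two_mul hy.ne' hzy h)
    simp only [List.sum_cons] at hsum ⊢
    omega

theorem not_dvd_two_pow {q : ℕ} (hq : 1 < q) (hodd : Odd q) (a : ℕ) : ¬ q ∣ 2 ^ a := fun h =>
  hq.ne' (((Nat.coprime_two_right.mpr hodd).pow_right a).eq_one_of_dvd h)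

theorem factorization_mul_two_pow {q : ℕ} (hodd : Odd q) (a : ℕ) :
    (q * 2 ^ a).factorization 2 = a := by
  rw [Nat.factorization_mul (by rintro rfl; simp at hodd) (by positivity),
    Nat.prime_two.factorization_pow, Finsupp.add_apply,
    Nat.factorization_eq_zero_of_not_dvd hodd.not_two_dvd_nat]
  simp

theorem eq_two_pow_of_not_dvd {q x a b : ℕ} (hx : x = 2 ^ a * q ^ b) (hqx : ¬ q ∣ x) :
    x = 2 ^ a := by
  rcases b with _ | b
  · simpa using hx
  · exact absurd (hx ▸ Dvd.dvd.mul_left (dvd_pow_self q b.succ_ne_zero) _) hqx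

theorem not_dvd_of_mem_dropWhile {q : ℕ} {l : List ℕ}
    (hl : l.Pairwise fun x y => y ∣ x ∧ y < x) {x : ℕ} (hx : x ∈ l.dropWhile (q ∣ ·)) :
    ¬ q ∣ x := by
  have hhead := List.head?_dropWhile_not (q ∣ ·) l
  have hpw := hl.sublist (List.dropWhile_sublist (q ∣ ·))
  generalize l.dropWhile (q ∣ ·) = t at hhead hpw hx
  rcases t with _ | ⟨y, t⟩
  · simp at hx
  · simp only [List.head?_cons, decide_eq_false_iff_not] at hhead
    rcases List.mem_cons.mp hx with rfl | hx
    · exact hhead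
    · exact fun hqx => hhead (hqx.trans (List.rel_of_pairwise_cons hpw hx).1)

namespace IsSCPartition

variable {p q U V : ℕ} {l l₁ l₂ : List ℕ}

theorem pairwise (h : IsSCPartition p q U l) : l.Pairwise fun x y => y ∣ x ∧ y < x :=
  List.isChain_iff_pairwise.mp h.2.1

theorem pos (hp : 0 < p) (hq : 0 < q) (h : IsSCPartition p q U l) {x : ℕ} (hx : x ∈ l) :
    0 < x := by
  obtain ⟨a, b, rfl⟩ := h.1 x hx
  positivity

theorem le_of_mem (h : IsSCPartition p q U l) {x : ℕ} (hx : x ∈ l) : x ≤ U :=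
  h.2.2 ▸ List.le_sum_of_mem hx

theorem append (h₁ : IsSCPartition p q U l₁) (h₂ : IsSCPartition p q V l₂)
    (h : ∀ x ∈ l₁.getLast?, ∀ y ∈ l₂.head?, y ∣ x ∧ y < x) :
    IsSCPartition p q (U + V) (l₁ ++ l₂) := by
  refine ⟨fun x hx => ?_, List.IsChain.append h₁.2.1 h₂.2.1 h, by
    rw [List.sum_append, h₁.2.2, h₂.2.2]⟩
  rcases List.mem_append.mp hx with hx | hx
  exacts [h₁.1 x hx, h₂.1 x hx]

theorem of_append (h : IsSCPartition p q U (l₁ ++ l₂)) :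
    IsSCPartition p q l₁.sum l₁ ∧ IsSCPartition p q l₂.sum l₂ ∧
      ∀ x ∈ l₁.getLast?, ∀ y ∈ l₂.head?, y ∣ x ∧ y < x := by
  obtain ⟨hc₁, hc₂, hjoin⟩ := List.isChain_append.mp h.2.1
  exact ⟨⟨fun x hx => h.1 x (List.mem_append_left _ hx), hc₁, rfl⟩,
    ⟨fun x hx => h.1 x (List.mem_append_right _ hx), hc₂, rfl⟩, hjoin⟩

theorem map_mul (hq : 0 < q) (h : IsSCPartition p q U l) :
    IsSCPartition p q (q * U) (l.map (q * ·)) := by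
  refine ⟨fun x hx => ?_, List.isChain_map_of_isChain _ (fun a b hab =>
    ⟨mul_dvd_mul_left q hab.1, Nat.mul_lt_mul_of_pos_left hab.2 hq⟩) h.2.1, by
      rw [List.sum_map_mul_left, List.map_id', h.2.2]⟩
  obtain ⟨y, hy, rfl⟩ := List.mem_map.mp hx
  obtain ⟨a, b, rfl⟩ := h.1 y hy
  exact ⟨a, b + 1, by ring⟩

end IsSCPartition

theorem Omega.finite (p q n : ℕ) : (Omega p q n).Finite := by
  refine ((List.range (n + 1)).reverse.sublists.finite_toSet).subset fun l hl => ?_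
  have hdec : l.Pairwise (· > ·) := hl.pairwise.imp And.right
  refine List.mem_sublists.mpr (List.sublist_of_subperm_of_pairwise ?_ hdec ?_)
  · exact hdec.nodup.subperm fun x hx => by simpa [Nat.lt_succ_iff] using hl.le_of_mem hx
  · exact List.pairwise_reverse.mpr List.pairwise_lt_range

def binaryParts (n : ℕ) : List ℕ := (n.bitIndices.map (2 ^ ·)).reverse

theorem sum_binaryParts (n : ℕ) : (binaryParts n).sum = n := by
  simp [binaryParts]

theorem exists_eq_two_pow_of_mem_binaryParts {x n : ℕ} (hx : x ∈ binaryParts n) :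
    ∃ a, x = 2 ^ a := by
  obtain ⟨a, -, rfl⟩ := List.mem_map.mp (List.mem_reverse.mp hx)
  exact ⟨a, rfl⟩

theorem pairwise_binaryParts (n : ℕ) :
    (binaryParts n).Pairwise fun x y => y ∣ x ∧ y < x := by
  simp only [binaryParts, List.pairwise_reverse, List.pairwise_map]
  exact Nat.bitIndices_sorted.pairwise.imp fun h =>
    ⟨pow_dvd_pow 2 h.le, Nat.pow_lt_pow_right (by norm_num) h⟩

theorem isSCPartition_binaryParts (q n : ℕ) : IsSCPartition 2 q n (binaryParts n) := by
  refine ⟨fun x hx => ?_, List.isChain_iff_pairwise.mpr (pairwise_binaryParts n),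
    sum_binaryParts n⟩
  obtain ⟨a, rfl⟩ := exists_eq_two_pow_of_mem_binaryParts hx
  exact ⟨a, 0, by simp⟩

theorem binaryParts_sum_eq_self {t : List ℕ} (ht : ∀ x ∈ t, ∃ a, x = 2 ^ a)
    (hdec : t.Pairwise (· > ·)) : binaryParts t.sum = t := by
  have hlog : ∀ x ∈ t, 2 ^ Nat.log2 x = x := fun x hx => by
    obtain ⟨a, rfl⟩ := ht x hx
    rw [Nat.log2_two_pow]
  have hsorted : ((t.map Nat.log2).reverse).SortedLT := by
    rw [List.sortedLT_iff_pairwise, List.pairwise_reverse, List.pairwise_map]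
    refine hdec.imp_of_mem fun hx hy hxy => ?_
    rw [← hlog _ hx, ← hlog _ hy] at hxy
    exact (Nat.pow_lt_pow_iff_right (by norm_num)).mp hxy
  have ht' : t = (((t.map Nat.log2).reverse).map (2 ^ ·)).reverse := by
    rw [List.map_reverse, List.reverse_reverse, List.map_map]
    exact (List.map_congr_left fun x hx => hlog x hx).trans (List.map_id t) |>.symm
  rw [ht', List.sum_reverse, binaryParts, Nat.bitIndices_sum_map_two_pow hsorted]

theorem sum_map_mul_binaryParts (q k : ℕ) : ((binaryParts k).map (q * ·)).sum = q * k := by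
  rw [List.sum_map_mul_left, List.map_id', sum_binaryParts]

theorem exists_eq_of_binaryParts_eq_append_cons {k j a : ℕ} {r : List ℕ}
    (h : binaryParts k = r ++ 2 ^ a :: binaryParts j) :
    ∃ w, k = 2 ^ (a + 1) * w + 2 ^ a + j := by
  have hsum := congrArg List.sum h
  rw [sum_binaryParts, List.sum_append, List.sum_cons, sum_binaryParts] at hsum
  have hpw := pairwise_binaryParts k
  rw [h, List.pairwise_append] at hpw
  obtain ⟨w, hw⟩ : 2 ^ (a + 1) ∣ r.sum := List.dvd_sum fun x hx => by
    obtain ⟨b, rfl⟩ := exists_eq_two_pow_of_mem_binaryParts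
      (show x ∈ binaryParts k by rw [h]; exact List.mem_append_left _ hx)
    exact pow_dvd_pow 2 <|
      (Nat.pow_lt_pow_iff_right one_lt_two).mp (hpw.2.2 _ hx _ List.mem_cons_self).2
  exact ⟨w, by omega⟩

theorem map_mul_binaryParts_ne_append {q k j u c : ℕ} (hq : 1 < q) (hodd : Odd q)
    {r : List ℕ} (hu : u ∈ r.getLast?) (hk : q * k + 1 = 2 ^ c)
    (hj : q * j + 1 = 2 ^ (u.factorization 2 + 1)) :
    (binaryParts k).map (q * ·) ≠ r ++ (binaryParts j).map (q * ·) := by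
  intro h
  obtain ⟨r₀, s₀, hsplit, rfl, hs₀⟩ := List.map_eq_append_iff.mp h
  rw [List.map_injective_iff.mpr (mul_right_injective₀ (by omega : q ≠ 0)) hs₀] at hsplit
  obtain ⟨e, he, rfl⟩ : ∃ e ∈ r₀.getLast?, q * e = u := by
    simpa [List.getLast?_map] using hu
  obtain ⟨r₁, rfl⟩ := List.getLast?_eq_some_iff.mp he
  obtain ⟨a, rfl⟩ := exists_eq_two_pow_of_mem_binaryParts
    (show e ∈ binaryParts k by simp [hsplit])
  rw [factorization_mul_two_pow hodd] at hj
  obtain ⟨w, hw⟩ := exists_eq_of_binaryParts_eq_append_cons (by simpa using hsplit)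
  -- the odd factor `2 * q * w + q + 2 > 1` cannot divide a power of two
  have hpow : 2 ^ a * (2 * q * w + q + 2) = 2 ^ c :=
    calc 2 ^ a * (2 * q * w + q + 2) = q * (2 ^ (a + 1) * w + 2 ^ a) + 2 ^ (a + 1) := by ring
      _ = q * (2 ^ (a + 1) * w + 2 ^ a) + (q * j + 1) := by rw [hj]
      _ = q * k + 1 := by rw [hw]; ring
      _ = 2 ^ c := hk
  have hodd' : Odd (2 * q * w + q + 2) :=
    (((even_two_mul q).mul_right w).add_odd hodd).add_even even_two
  have := ((Nat.coprime_two_right.mpr hodd').pow_right c).eq_one_of_dvd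
    (Dvd.intro_left _ hpow)
  omega

theorem eq_of_append_map_mul_binaryParts_eq {q k₁ k₂ u₁ u₂ : ℕ} (hq : 1 < q) (hodd : Odd q)
    {m₁ m₂ : List ℕ} (hu₁ : u₁ ∈ m₁.getLast?)
    (hk₁ : q * k₁ + 1 = 2 ^ (u₁.factorization 2 + 1))
    (hu₂ : u₂ ∈ m₂.getLast?) (hk₂ : q * k₂ + 1 = 2 ^ (u₂.factorization 2 + 1))
    (h : m₁ ++ (binaryParts k₁).map (q * ·) = m₂ ++ (binaryParts k₂).map (q * ·)) :
    m₁ = m₂ := by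
  rcases List.append_eq_append_iff.mp h with ⟨r, rfl, hr⟩ | ⟨r, rfl, hr⟩
  · by_cases hr0 : r = []
    · simp [hr0]
    rw [List.getLast?_append_of_ne_nil _ hr0] at hu₂
    exact absurd hr (map_mul_binaryParts_ne_append hq hodd hu₂ hk₁ hk₂)
  · by_cases hr0 : r = []
    · simp [hr0]
    rw [List.getLast?_append_of_ne_nil _ hr0] at hu₁
    exact absurd hr (map_mul_binaryParts_ne_append hq hodd hu₁ hk₂ hk₁)

/-- The chains of multiples of `q` that complete to a partition of `n` by appending the binary
expansion of the remainder `n - m.sum`. -/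
def qPrefixes (q n : ℕ) : Set (List ℕ) :=
  {m | IsSCPartition 2 q m.sum m ∧ (∀ x ∈ m, q ∣ x) ∧ m.sum ≤ n ∧
    ∀ u ∈ m.getLast?, n - m.sum < 2 ^ (u.factorization 2 + 1)}

section qPrefixes

variable {q n : ℕ} {m : List ℕ}

theorem mem_qPrefixes_of_append {t : List ℕ} (hq : 0 < q) (hl : IsSCPartition 2 q n (m ++ t))
    (hmq : ∀ x ∈ m, q ∣ x) (htq : ∀ x ∈ t, ¬ q ∣ x) :
    m ∈ qPrefixes q n ∧ t = binaryParts (n - m.sum) := by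
  obtain ⟨hm, ht, hjoin⟩ := hl.of_append
  have hsum : m.sum + t.sum = n := by rw [← List.sum_append]; exact hl.2.2
  have htpow : ∀ x ∈ t, ∃ a, x = 2 ^ a := fun x hx => by
    obtain ⟨a, b, hab⟩ := ht.1 x hx
    exact ⟨a, eq_two_pow_of_not_dvd hab (htq x hx)⟩
  have htbin : binaryParts (n - m.sum) = t := by
    rw [← hsum, Nat.add_sub_cancel_left]
    exact binaryParts_sum_eq_self htpow (ht.pairwise.imp And.right)
  refine ⟨⟨hm, hmq, by omega, fun u hu => ?_⟩, htbin.symm⟩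
  rcases t with _ | ⟨y, t⟩
  · rw [← hsum, List.sum_nil, add_zero, Nat.sub_self]
    positivity
  obtain ⟨a, rfl⟩ := htpow y List.mem_cons_self
  have hu0 : u ≠ 0 := (hm.pos two_pos hq (List.mem_of_getLast? hu)).ne'
  have hav : a ≤ u.factorization 2 :=
    (Nat.prime_two.pow_dvd_iff_le_factorization hu0).mp (hjoin u hu _ rfl).1
  have hlt := sum_lt_two_mul_of_isChain ht.2.1 (by positivity)
  calc n - m.sum = (2 ^ a :: t).sum := by omega
    _ < 2 ^ (a + 1) := by rw [pow_succ]; omega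
    _ ≤ 2 ^ (u.factorization 2 + 1) := Nat.pow_le_pow_right two_pos (by omega)

theorem append_binaryParts_mem_Omega (hq : 1 < q) (hodd : Odd q) (hm : m ∈ qPrefixes q n) :
    m ++ binaryParts (n - m.sum) ∈ Omega 2 q n := by
  obtain ⟨hmp, hmq, hle, hfit⟩ := hm
  have := hmp.append (isSCPartition_binaryParts q (n - m.sum)) fun u hu y hy => by
    have hy' := List.mem_of_mem_head? hy
    obtain ⟨a, rfl⟩ := exists_eq_two_pow_of_mem_binaryParts hy'
    have hu0 : u ≠ 0 := (hmp.pos two_pos (by omega) (List.mem_of_getLast? hu)).ne'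
    have hav : a ≤ u.factorization 2 := Nat.lt_succ_iff.mp <|
      (Nat.pow_lt_pow_iff_right one_lt_two).mp <|
        ((isSCPartition_binaryParts q _).le_of_mem hy').trans_lt (hfit u hu)
    have hdvd : 2 ^ a ∣ u := (Nat.prime_two.pow_dvd_iff_le_factorization hu0).mpr hav
    refine ⟨hdvd, (Nat.le_of_dvd (Nat.pos_of_ne_zero hu0) hdvd).lt_of_ne ?_⟩
    rintro rfl
    exact not_dvd_two_pow hq hodd a (hmq _ (List.mem_of_getLast? hu))
  rwa [Nat.add_sub_cancel' hle] at this

theorem takeWhile_append_binaryParts (hq : 1 < q) (hodd : Odd q) (hmq : ∀ x ∈ m, q ∣ x)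
    (T : ℕ) : (m ++ binaryParts T).takeWhile (q ∣ ·) = m := by
  rw [List.takeWhile_append_of_pos (by simpa using hmq), List.append_right_eq_self,
    List.takeWhile_eq_nil_iff]
  intro h
  obtain ⟨a, ha⟩ := exists_eq_two_pow_of_mem_binaryParts (List.get_mem _ ⟨0, h⟩)
  rw [ha]
  simpa using not_dvd_two_pow hq hodd a

theorem injOn_append_binaryParts (hq : 1 < q) (hodd : Odd q) :
    Set.InjOn (fun m => m ++ binaryParts (n - m.sum)) (qPrefixes q n) :=
    fun m₁ h₁ m₂ h₂ he => by
  rw [← takeWhile_append_binaryParts hq hodd h₁.2.1 (n - m₁.sum),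
    ← takeWhile_append_binaryParts hq hodd h₂.2.1 (n - m₂.sum)]
  exact congrArg _ he

theorem Omega_eq_image_qPrefixes (hq : 1 < q) (hodd : Odd q) :
    Omega 2 q n = (fun m => m ++ binaryParts (n - m.sum)) '' qPrefixes q n := by
  ext l
  refine ⟨fun hl => ?_, fun ⟨m, hm, hl⟩ => hl ▸ append_binaryParts_mem_Omega hq hodd hm⟩
  have hsplit := List.takeWhile_append_dropWhile (p := (q ∣ ·)) (l := l)
  rw [← hsplit] at hl
  obtain ⟨hm, ht⟩ := mem_qPrefixes_of_append (by omega) hl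
    (fun x hx => by simpa using List.mem_takeWhile_imp hx)
    (fun x hx => not_dvd_of_mem_dropWhile (hsplit ▸ hl).pairwise hx)
  exact ⟨_, hm, (congrArg (_ ++ ·) ht.symm).trans hsplit⟩

theorem W_eq_ncard_qPrefixes (hq : 1 < q) (hodd : Odd q) : W 2 q n = (qPrefixes q n).ncard := by
  rw [W, Omega_eq_image_qPrefixes hq hodd, (injOn_append_binaryParts hq hodd).ncard_image]

theorem qPrefixes_finite (hq : 1 < q) (hodd : Odd q) : (qPrefixes q n).Finite :=
  ((Omega_eq_image_qPrefixes hq hodd) ▸ Omega.finite 2 q n).of_finite_image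
    (injOn_append_binaryParts hq hodd)

theorem qPrefixes_succ_subset (h : ¬ q ∣ n + 1) : qPrefixes q (n + 1) ⊆ qPrefixes q n := by
  rintro m ⟨hm, hmq, hle, hfit⟩
  have hne : m.sum ≠ n + 1 := fun he => h (he ▸ List.dvd_sum hmq)
  exact ⟨hm, hmq, by omega, fun u hu => lt_of_le_of_lt (by omega) (hfit u hu)⟩

theorem append_map_mul_binaryParts_mem (hq : 1 < q) (hodd : Odd q) (hm : m ∈ qPrefixes q n)
    {u k N : ℕ} (hu : u ∈ m.getLast?) (hk : q * k + 1 = 2 ^ (u.factorization 2 + 1))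
    (hN : m.sum + q * k + 1 = N) :
    m ++ (binaryParts k).map (q * ·) ∈ qPrefixes q N := by
  obtain ⟨hmp, hmq, -, -⟩ := hm
  have hsum : (m ++ (binaryParts k).map (q * ·)).sum = m.sum + q * k := by
    rw [List.sum_append, sum_map_mul_binaryParts]
  have hpart := hmp.append ((isSCPartition_binaryParts q k).map_mul (by omega))
    fun x hx y hy => by
      obtain rfl := Option.mem_unique hx hu
      obtain ⟨z, hz, rfl⟩ := List.mem_map.mp (List.mem_of_mem_head? hy)
      obtain ⟨a, rfl⟩ := exists_eq_two_pow_of_mem_binaryParts hz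
      have hx0 : x ≠ 0 := (hmp.pos two_pos (by omega) (List.mem_of_getLast? hx)).ne'
      have hak : 2 ^ a ≤ k := (isSCPartition_binaryParts q k).le_of_mem hz
      have hav : a + 1 ≤ x.factorization 2 := by
        have : 2 ^ a < 2 ^ x.factorization 2 := by
          rw [pow_succ] at hk
          nlinarith
        exact (Nat.pow_lt_pow_iff_right one_lt_two).mp this
      have hdvd : q * 2 ^ (a + 1) ∣ x :=
        ((Nat.coprime_two_right.mpr hodd).pow_right _).mul_dvd_of_dvd_of_dvd
          (hmq x (List.mem_of_getLast? hx))
          ((Nat.prime_two.pow_dvd_iff_le_factorization hx0).mpr hav)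
      have hlt : q * 2 ^ a < q * 2 ^ (a + 1) :=
        Nat.mul_lt_mul_of_pos_left (Nat.pow_lt_pow_succ one_lt_two) (by omega)
      exact ⟨(mul_dvd_mul_left q (pow_dvd_pow 2 a.le_succ)).trans hdvd,
        hlt.trans_le (Nat.le_of_dvd (Nat.pos_of_ne_zero hx0) hdvd)⟩
  refine ⟨hsum ▸ hpart, fun x hx => ?_, by omega, fun _ _ => ?_⟩
  · rcases List.mem_append.mp hx with hx | hx
    · exact hmq x hx
    · obtain ⟨z, -, rfl⟩ := List.mem_map.mp hx
      exact dvd_mul_right q z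
  · rw [hsum, ← hN, Nat.add_sub_cancel_left]
    exact Nat.one_lt_two_pow (Nat.succ_ne_zero _)

theorem exists_carry_add_one_eq_two_pow (hq : 1 < q) (hodd : Odd q) (h : q ∣ n + 1)
    (hm : m ∈ qPrefixes q n \ qPrefixes q (n + 2)) :
    ∃ u ∈ m.getLast?, q * ((n + 1 - m.sum) / q) + 1 = 2 ^ (u.factorization 2 + 1) ∧
      m.sum + q * ((n + 1 - m.sum) / q) = n + 1 := by
  obtain ⟨⟨hmp, hmq, hle, hfit⟩, hm'⟩ := hm
  obtain ⟨u, hu, hge⟩ :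
      ∃ u ∈ m.getLast?, 2 ^ (u.factorization 2 + 1) ≤ n + 2 - m.sum := by
    by_contra! hfit'
    exact hm' ⟨hmp, hmq, by omega, hfit'⟩
  have hdvd : q ∣ n + 1 - m.sum := Nat.dvd_sub h (List.dvd_sum hmq)
  have hne : n + 1 - m.sum ≠ 2 ^ (u.factorization 2 + 1) := fun he =>
    not_dvd_two_pow hq hodd _ (he ▸ hdvd)
  have hlt := hfit u hu
  rw [Nat.mul_div_cancel' hdvd]
  exact ⟨u, hu, by omega, by omega⟩

/-- A prefix of `n` that is not a prefix of `n + 2` leaves the remainder `2 ^ (ν₂ u + 1) - 2`;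
appending the carry `q * ((n + 1 - m.sum) / q) = 2 ^ (ν₂ u + 1) - 1` gives a prefix of sum
`n + 1`. -/
def carryPrefix (q n : ℕ) (m : List ℕ) : List ℕ :=
  m ++ (binaryParts ((n + 1 - m.sum) / q)).map (q * ·)

theorem carryPrefix_mem (hq : 1 < q) (hodd : Odd q) (h : q ∣ n + 1)
    (hm : m ∈ qPrefixes q n \ qPrefixes q (n + 2)) :
    carryPrefix q n m ∈ qPrefixes q (n + 2) \ qPrefixes q n := by
  obtain ⟨u, hu, hk, hsum⟩ := exists_carry_add_one_eq_two_pow hq hodd h hm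
  refine ⟨append_map_mul_binaryParts_mem hq hodd hm.1 hu hk (by omega), fun h' => ?_⟩
  have := h'.2.2.1
  rw [carryPrefix, List.sum_append, sum_map_mul_binaryParts] at this
  omega

theorem injOn_carryPrefix (hq : 1 < q) (hodd : Odd q) (h : q ∣ n + 1) :
    Set.InjOn (carryPrefix q n) (qPrefixes q n \ qPrefixes q (n + 2)) :=
    fun m₁ h₁ m₂ h₂ he => by
  obtain ⟨u₁, hu₁, hk₁, -⟩ := exists_carry_add_one_eq_two_pow hq hodd h h₁
  obtain ⟨u₂, hu₂, hk₂, -⟩ := exists_carry_add_one_eq_two_pow hq hodd h h₂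
  exact eq_of_append_map_mul_binaryParts_eq hq hodd hu₁ hk₁ hu₂ hk₂ he

theorem W_succ_le_of_not_dvd (hq : 1 < q) (hodd : Odd q) (h : ¬ q ∣ n + 1) :
    W 2 q (n + 1) ≤ W 2 q n := by
  rw [W_eq_ncard_qPrefixes hq hodd, W_eq_ncard_qPrefixes hq hodd]
  exact Set.ncard_le_ncard (qPrefixes_succ_subset h) (qPrefixes_finite hq hodd)

theorem W_le_W_add_two_of_dvd (hq : 1 < q) (hodd : Odd q) (h : q ∣ n + 1) :
    W 2 q n ≤ W 2 q (n + 2) := by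
  have hfin {N : ℕ} : (qPrefixes q N).Finite := qPrefixes_finite hq hodd
  rw [W_eq_ncard_qPrefixes hq hodd, W_eq_ncard_qPrefixes hq hodd,
    ← Set.ncard_inter_add_ncard_sdiff_eq_ncard _ (qPrefixes q (n + 2)) hfin,
    ← Set.ncard_inter_add_ncard_sdiff_eq_ncard _ (qPrefixes q n) hfin, Set.inter_comm]
  exact Nat.add_le_add_left (Set.ncard_le_ncard_of_injOn _ (fun _ => carryPrefix_mem hq hodd h)
    (injOn_carryPrefix hq hodd h) hfin.sdiff) _

end qPrefixes

theorem W_local_monotonicity (q : ℕ) (hq : 1 < q) (hq2 : Nat.Coprime 2 q) :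
    (∀ U : ℕ, 1 ≤ U →
      W 2 q (q * U) ≥ W 2 q (q * U + 1) ∧ W 2 q (q * U + 1) ≥ W 2 q (q * U - 1)) ∧
    (∀ U r : ℕ, r < q - 1 → W 2 q (q * U + r) ≥ W 2 q (q * U + r + 1)) := by
  have hodd := Nat.coprime_two_left.mp hq2
  have hndvd {U s : ℕ} (hs₀ : 0 < s) (hs : s < q) : ¬ q ∣ q * U + s := fun hdvd =>
    Nat.not_dvd_of_pos_of_lt hs₀ hs ((Nat.dvd_add_right (dvd_mul_right q U)).mp hdvd)
  refine ⟨fun U hU => ⟨W_succ_le_of_not_dvd hq hodd (hndvd one_pos hq), ?_⟩,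
    fun U r hr => W_succ_le_of_not_dvd hq hodd (hndvd r.succ_pos (by omega))⟩
  have hqU : q ≤ q * U := Nat.le_mul_of_pos_right q hU
  have hdvd : q ∣ q * U - 1 + 1 := by rw [Nat.sub_add_cancel (by omega)]; exact dvd_mul_right q U
  have := W_le_W_add_two_of_dvd hq hodd hdvd
  rwa [show q * U - 1 + 2 = q * U + 1 by omega] at this
end

section
/- For (p,q) = (2,3) and every nonnegative integer U: W(U) = 2 if and only if U ∈ {3,4,6,7}, or U = 9·2^a − 1 for some nonnegative integer a, or U = 15·2^a − 1 for some nonnegative integer a. -/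
/-!
Deleting a final part `1` gives `W(U+1) = W*(U+1) + W*(U)`, where `W*` counts partitions without
a part `1`. The smallest part of such a partition is divisible by `2` or `3`, hence so are all
parts, and by inclusion–exclusion, dividing out `2`, `3` or `6` gives
`W*(U) + W(U/6) = W(U/2) + W(U/3)` (terms with non-integral arguments omitted). For `U = 6k + r`
this yields `W(6k+2) = W(3k+1)`, `W(6k+5) = W(3k+2)`, `W(6k+3) = W(2k+1) + W(3k+1)`,
`W(6k+4) = W(3k+2) + W(2k+1)` and `W(6k+r) + W(k) = W(3k) + W(2k)` for `r ≤ 1`.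
A strong induction then shows that `min (W U) 3` is `1` on `{0, 1} ∪ {3·2^a - 1}`, `2` on
`{3, 4, 6, 7} ∪ {9·2^a - 1} ∪ {15·2^a - 1}` and `3` elsewhere: numbers `c·2^a - 1` with `3 ∣ c`
are `≡ 2 (mod 3)`, and such a number `≡ 2 (mod 6)` is `c - 1`, while one `≡ 5 (mod 6)` is
`2m + 1` with `m = c·2^(a-1) - 1`, matching the two recurrences with a single term.
-/

section General

variable {p q : ℕ}

theorem IsSCPartition.pairwise_s16 {U : ℕ} {l : List ℕ} (h : IsSCPartition p q U l) :
    l.Pairwise fun x y => y ∣ x ∧ y < x :=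
  haveI : Trans (fun x y : ℕ => y ∣ x ∧ y < x) (fun x y => y ∣ x ∧ y < x)
      (fun x y => y ∣ x ∧ y < x) :=
    ⟨fun hxy hyz => ⟨hyz.1.trans hxy.1, hyz.2.trans hxy.2⟩⟩
  List.isChain_iff_pairwise.mp h.2.1

theorem IsSCPartition.pos_s16 (hp : 0 < p) (hq : 0 < q) {U : ℕ} {l : List ℕ}
    (h : IsSCPartition p q U l) {x : ℕ} (hx : x ∈ l) : 0 < x := by
  obtain ⟨a, b, rfl⟩ := h.1 x hx
  positivity

theorem Omega_finite (p q U : ℕ) : (Omega p q U).Finite := by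
  refine Set.Finite.of_finite_image (f := List.toFinset)
    ((Finset.range (U + 1)).powerset.finite_toSet.subset ?_) ?_
  · rintro _ ⟨l, hl, rfl⟩
    simp only [Finset.coe_powerset, Set.mem_preimage, Set.mem_powerset_iff, Finset.coe_subset]
    intro x hx
    have : x ≤ U := hl.2.2 ▸ List.le_sum_of_mem (List.mem_toFinset.mp hx)
    simpa [Nat.lt_succ_iff]
  · intro l₁ h₁ l₂ h₂ h
    have gt : ∀ {l : List ℕ}, l ∈ Omega p q U → l.Pairwise (· > ·) :=
      fun hl => hl.pairwise_s16.imp And.right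
    exact (gt h₁).eq_of_mem_iff (gt h₂) fun x => by
      rw [← List.mem_toFinset, h, List.mem_toFinset]

theorem Omega_zero (hp : 0 < p) (hq : 0 < q) : Omega p q 0 = {[]} := by
  refine Set.eq_singleton_iff_unique_mem.mpr ⟨⟨by simp, List.isChain_nil, rfl⟩, fun l hl => ?_⟩
  refine List.eq_nil_iff_forall_not_mem.mpr fun x hx => ?_
  have := List.le_sum_of_mem hx
  have := hl.pos_s16 hp hq hx
  have := hl.2.2
  omega

theorem W_zero (hp : 0 < p) (hq : 0 < q) : W p q 0 = 1 := by
  rw [W, Omega_zero hp hq, Set.ncard_singleton]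

theorem append_one_mem_Omega (hp : 0 < p) (hq : 0 < q) {U : ℕ} {l : List ℕ}
    (hl : l ∈ OmegaStar p q U) : l ++ [1] ∈ Omega p q (U + 1) := by
  obtain ⟨h, h1⟩ := hl
  refine ⟨?_, List.isChain_append.mpr ⟨h.2.1, List.isChain_singleton 1, fun x hx y hy => ?_⟩,
    by simp [h.2.2]⟩
  · simp only [List.mem_append, List.mem_singleton]
    rintro x (hx | rfl)
    exacts [h.1 x hx, ⟨0, 0, by simp⟩]
  · obtain rfl : y = 1 := by simpa [eq_comm] using hy
    have hxl : x ∈ l := List.mem_of_getLast? hx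
    have hx0 := h.pos_s16 hp hq hxl
    have hx1 : x ≠ 1 := fun hx1 => h1 (hx1 ▸ hxl)
    exact ⟨one_dvd x, by omega⟩

theorem Omega_succ (hp : 0 < p) (hq : 0 < q) (U : ℕ) :
    Omega p q (U + 1) = OmegaStar p q (U + 1) ∪ (· ++ [1]) '' OmegaStar p q U := by
  ext l
  refine ⟨fun hl => ?_, ?_⟩
  · by_cases h1 : 1 ∈ l
    · right
      obtain ⟨s, t, rfl⟩ := List.append_of_mem h1
      have hpw := hl.pairwise_s16
      rw [List.pairwise_append, List.pairwise_cons] at hpw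
      obtain rfl : t = [] := List.eq_nil_iff_forall_not_mem.mpr fun y hy =>
        (hl.pos_s16 hp hq (by simp [hy])).ne' (Nat.lt_one_iff.mp (hpw.2.1.1 y hy).2)
      refine ⟨s, ⟨⟨fun x hx => hl.1 x (by simp [hx]), hpw.1.isChain, ?_⟩, fun hs => ?_⟩, rfl⟩
      · simpa using hl.2.2
      · exact (lt_irrefl 1) (hpw.2.2 1 hs 1 (by simp)).2
    · exact Or.inl ⟨hl, h1⟩
  · rintro (hl | ⟨s, hs, rfl⟩)
    exacts [hl.1, append_one_mem_Omega hp hq hs]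

theorem W_succ (hp : 0 < p) (hq : 0 < q) (U : ℕ) :
    W p q (U + 1) = Wstar p q (U + 1) + Wstar p q U := by
  have hdisj : Disjoint (OmegaStar p q (U + 1)) ((· ++ [1]) '' OmegaStar p q U) :=
    Set.disjoint_left.mpr fun _ hl ⟨_, _, h⟩ => hl.2 (h ▸ by simp)
  rw [W, Omega_succ hp hq, Set.ncard_union_eq hdisj ((Omega_finite p q _).subset fun _ h => h.1)
    (((Omega_finite p q U).subset fun _ h => h.1).image _),
    Set.ncard_image_of_injective _ (List.append_left_injective [1])]
  rfl

def OmegaDvd (p q d U : ℕ) : Set (List ℕ) := {l | l ∈ Omega p q U ∧ ∀ x ∈ l, d ∣ x}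

theorem OmegaDvd_finite (p q d U : ℕ) : (OmegaDvd p q d U).Finite :=
  (Omega_finite p q U).subset fun _ hl => hl.1

theorem OmegaDvd_eq_empty {d U : ℕ} (h : ¬ d ∣ U) : OmegaDvd p q d U = ∅ :=
  Set.eq_empty_of_forall_notMem fun _ hl => h (hl.1.2.2 ▸ List.dvd_sum hl.2)

theorem OmegaStar_eq_union (hp : 1 < p) (hq : 1 < q) (U : ℕ) :
    OmegaStar p q U = OmegaDvd p q p U ∪ OmegaDvd p q q U := by
  ext l
  constructor
  · rintro ⟨hl, h1⟩
    rcases List.eq_nil_or_concat' l with rfl | ⟨L, m, rfl⟩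
    · exact Or.inl ⟨hl, by simp⟩
    have hdvd : ∀ x ∈ L ++ [m], m ∣ x := by
      have := (List.pairwise_append.mp hl.pairwise_s16).2.2
      simp only [List.mem_append, List.mem_singleton]
      rintro x (hx | rfl)
      exacts [(this x hx m (by simp)).1, dvd_rfl]
    obtain ⟨a, b, hm⟩ := hl.1 m (by simp)
    have : p ∣ m ∨ q ∣ m := by
      rcases a with _ | a
      · rcases b with _ | b
        · exact absurd (by simp [hm]) h1
        · exact Or.inr (hm ▸ Dvd.dvd.mul_left (dvd_pow_self q b.succ_ne_zero) _)
      · exact Or.inl (hm ▸ Dvd.dvd.mul_right (dvd_pow_self p a.succ_ne_zero) _)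
    rcases this with h | h
    exacts [Or.inl ⟨hl, fun x hx => h.trans (hdvd x hx)⟩,
      Or.inr ⟨hl, fun x hx => h.trans (hdvd x hx)⟩]
  · rintro (⟨hl, hd⟩ | ⟨hl, hd⟩) <;> refine ⟨hl, fun h1 => ?_⟩
    · exact hp.ne' (Nat.dvd_one.mp (hd 1 h1))
    · exact hq.ne' (Nat.dvd_one.mp (hd 1 h1))

theorem OmegaDvd_inter (hpq : p.Coprime q) (U : ℕ) :
    OmegaDvd p q p U ∩ OmegaDvd p q q U = OmegaDvd p q (p * q) U := by
  ext l
  constructor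
  · rintro ⟨⟨hl, hp⟩, -, hq⟩
    exact ⟨hl, fun x hx => hpq.mul_dvd_of_dvd_of_dvd (hp x hx) (hq x hx)⟩
  · rintro ⟨hl, h⟩
    exact ⟨⟨hl, fun x hx => dvd_of_mul_right_dvd (h x hx)⟩,
      ⟨hl, fun x hx => dvd_of_mul_left_dvd (h x hx)⟩⟩

theorem exists_eq_mul_pow_mul_pow (hp : 1 < p) (hq : 1 < q) (hpq : p.Coprime q) {i j a b : ℕ}
    (h : p ^ i * q ^ j ∣ p ^ a * q ^ b) :
    ∃ a' b', p ^ a * q ^ b = p ^ i * q ^ j * (p ^ a' * q ^ b') := by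
  have hi : i ≤ a := (Nat.pow_dvd_pow_iff_le_right hp).mp
    ((Nat.Coprime.pow i b hpq).dvd_of_dvd_mul_right (dvd_of_mul_right_dvd h))
  have hj : j ≤ b := (Nat.pow_dvd_pow_iff_le_right hq).mp
    ((Nat.Coprime.pow j a hpq.symm).dvd_of_dvd_mul_left (dvd_of_mul_left_dvd h))
  obtain ⟨a', rfl⟩ := Nat.exists_eq_add_of_le hi
  obtain ⟨b', rfl⟩ := Nat.exists_eq_add_of_le hj
  exact ⟨a', b', by ring⟩

section Scaling

variable (hp : 1 < p) (hq : 1 < q) (hpq : p.Coprime q) {d i j : ℕ} (hd : d = p ^ i * q ^ j)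
include hp hq hpq hd

theorem map_mul_mem_Omega_iff {V : ℕ} {m : List ℕ} :
    m.map (d * ·) ∈ Omega p q (d * V) ↔ m ∈ Omega p q V := by
  have hd0 : 0 < d := hd ▸ by positivity
  have hsum : (m.map (d * ·)).sum = d * m.sum := by
    simpa using List.sum_map_mul_left m (fun x => x) d
  simp only [Omega, Set.mem_ofPred_eq, IsSCPartition, List.forall_mem_map, List.Chain',
    List.isChain_map, Nat.mul_dvd_mul_iff_left hd0, Nat.mul_lt_mul_left hd0, hsum,
    Nat.mul_right_inj hd0.ne']
  refine and_congr_left' (forall₂_congr fun x _ => ⟨fun ⟨a, b, h⟩ => ?_, fun ⟨a, b, h⟩ => ?_⟩)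
  · obtain ⟨a', b', h'⟩ := exists_eq_mul_pow_mul_pow hp hq hpq (hd ▸ h ▸ dvd_mul_right d x)
    exact ⟨a', b', Nat.eq_of_mul_eq_mul_left hd0 (h.trans (hd ▸ h'))⟩
  · exact ⟨i + a, j + b, by rw [hd, h]; ring⟩

theorem OmegaDvd_mul_eq_image (V : ℕ) :
    OmegaDvd p q d (d * V) = List.map (d * ·) '' Omega p q V := by
  ext l
  constructor
  · rintro ⟨hl, hdvd⟩
    have hmap : (l.map (· / d)).map (d * ·) = l := by
      rw [List.map_map]
      exact List.map_congr_left (fun x hx => Nat.mul_div_cancel' (hdvd x hx)) |>.trans l.map_id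
    exact ⟨_, (map_mul_mem_Omega_iff hp hq hpq hd).mp (by rwa [hmap]), hmap⟩
  · rintro ⟨m, hm, rfl⟩
    exact ⟨(map_mul_mem_Omega_iff hp hq hpq hd).mpr hm, by simp⟩

theorem ncard_OmegaDvd_mul (V : ℕ) : (OmegaDvd p q d (d * V)).ncard = W p q V := by
  have hd0 : 0 < d := hd ▸ by positivity
  rw [OmegaDvd_mul_eq_image hp hq hpq hd, W]
  exact Set.ncard_image_of_injective _
    (List.map_injective_iff.mpr fun _ _ h => Nat.eq_of_mul_eq_mul_left hd0 h)

theorem W_le_W_mul (V : ℕ) : W p q V ≤ W p q (d * V) :=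
  ncard_OmegaDvd_mul hp hq hpq hd V ▸ Set.ncard_le_ncard (fun _ hl => hl.1) (Omega_finite p q _)

end Scaling

section Wstar

variable (hp : 1 < p) (hq : 1 < q)
include hp hq

theorem Wstar_eq_zero {U : ℕ} (h₁ : ¬ p ∣ U) (h₂ : ¬ q ∣ U) : Wstar p q U = 0 := by
  rw [Wstar, OmegaStar_eq_union hp hq, OmegaDvd_eq_empty h₁, OmegaDvd_eq_empty h₂,
    Set.union_empty, Set.ncard_empty]

variable (hpq : p.Coprime q)
include hpq

theorem Wstar_add_ncard_OmegaDvd_mul (U : ℕ) :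
    Wstar p q U + (OmegaDvd p q (p * q) U).ncard =
      (OmegaDvd p q p U).ncard + (OmegaDvd p q q U).ncard := by
  rw [Wstar, OmegaStar_eq_union hp hq, ← OmegaDvd_inter hpq]
  exact Set.ncard_union_add_ncard_inter _ _ (OmegaDvd_finite ..) (OmegaDvd_finite ..)

theorem Wstar_left_mul {V : ℕ} (h : ¬ q ∣ p * V) : Wstar p q (p * V) = W p q V := by
  have := Wstar_add_ncard_OmegaDvd_mul hp hq hpq (p * V)
  rwa [OmegaDvd_eq_empty h, OmegaDvd_eq_empty fun h' => h (dvd_of_mul_left_dvd h'),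
    ncard_OmegaDvd_mul hp hq hpq (i := 1) (j := 0) (by simp), Set.ncard_empty] at this

theorem Wstar_right_mul {V : ℕ} (h : ¬ p ∣ q * V) : Wstar p q (q * V) = W p q V := by
  have := Wstar_add_ncard_OmegaDvd_mul hp hq hpq (q * V)
  rw [OmegaDvd_eq_empty h, OmegaDvd_eq_empty fun h' => h (dvd_of_mul_right_dvd h'),
    ncard_OmegaDvd_mul hp hq hpq (i := 0) (j := 1) (by simp), Set.ncard_empty] at this
  omega

theorem Wstar_mul_mul_add (V : ℕ) :
    Wstar p q (p * q * V) + W p q V = W p q (q * V) + W p q (p * V) := by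
  have h₁ : (OmegaDvd p q p (p * q * V)).ncard = W p q (q * V) := by
    rw [mul_assoc]; exact ncard_OmegaDvd_mul hp hq hpq (i := 1) (j := 0) (by simp) _
  have h₂ : (OmegaDvd p q q (p * q * V)).ncard = W p q (p * V) := by
    rw [mul_comm p q, mul_assoc]; exact ncard_OmegaDvd_mul hp hq hpq (i := 0) (j := 1) (by simp) _
  have := Wstar_add_ncard_OmegaDvd_mul hp hq hpq (p * q * V)
  rwa [h₁, h₂, ncard_OmegaDvd_mul hp hq hpq (i := 1) (j := 1) (by simp)] at this

end Wstar

end General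

section TwoThree

theorem W_two_three_succ (U : ℕ) : W 2 3 (U + 1) = Wstar 2 3 (U + 1) + Wstar 2 3 U :=
  W_succ (by norm_num) (by norm_num) U

theorem Wstar_two_three_eq_zero {U : ℕ} (h₂ : ¬ 2 ∣ U) (h₃ : ¬ 3 ∣ U) : Wstar 2 3 U = 0 :=
  Wstar_eq_zero (by norm_num) (by norm_num) h₂ h₃

theorem Wstar_two_mul {V : ℕ} (h : ¬ 3 ∣ 2 * V) : Wstar 2 3 (2 * V) = W 2 3 V :=
  Wstar_left_mul (by norm_num) (by norm_num) (by norm_num) h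

theorem Wstar_three_mul {V : ℕ} (h : ¬ 2 ∣ 3 * V) : Wstar 2 3 (3 * V) = W 2 3 V :=
  Wstar_right_mul (by norm_num) (by norm_num) (by norm_num) h

theorem W_six_mul (k : ℕ) : W 2 3 (6 * k) + W 2 3 k = W 2 3 (3 * k) + W 2 3 (2 * k) := by
  rcases k with _ | k
  · rfl
  rw [show 6 * (k + 1) = 6 * k + 5 + 1 by ring, W_two_three_succ,
    Wstar_two_three_eq_zero (U := 6 * k + 5) (by omega) (by omega), add_zero,
    show 6 * k + 5 + 1 = 2 * 3 * (k + 1) by ring]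
  exact Wstar_mul_mul_add (by norm_num) (by norm_num) (by norm_num) _

theorem W_six_mul_add_one (k : ℕ) :
    W 2 3 (6 * k + 1) + W 2 3 k = W 2 3 (3 * k) + W 2 3 (2 * k) := by
  rw [W_two_three_succ, Wstar_two_three_eq_zero (U := 6 * k + 1) (by omega) (by omega), zero_add,
    show 6 * k = 2 * 3 * k by ring]
  exact Wstar_mul_mul_add (by norm_num) (by norm_num) (by norm_num) _

theorem W_six_mul_add_two (k : ℕ) : W 2 3 (6 * k + 2) = W 2 3 (3 * k + 1) := by
  rw [W_two_three_succ, Wstar_two_three_eq_zero (U := 6 * k + 1) (by omega) (by omega), add_zero,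
    show 6 * k + 1 + 1 = 2 * (3 * k + 1) by ring, Wstar_two_mul (by omega)]

theorem W_six_mul_add_three (k : ℕ) :
    W 2 3 (6 * k + 3) = W 2 3 (2 * k + 1) + W 2 3 (3 * k + 1) := by
  rw [W_two_three_succ, show 6 * k + 2 + 1 = 3 * (2 * k + 1) by ring,
    show 6 * k + 2 = 2 * (3 * k + 1) by ring, Wstar_three_mul (by omega), Wstar_two_mul (by omega)]

theorem W_six_mul_add_four (k : ℕ) :
    W 2 3 (6 * k + 4) = W 2 3 (3 * k + 2) + W 2 3 (2 * k + 1) := by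
  rw [W_two_three_succ, show 6 * k + 3 + 1 = 2 * (3 * k + 2) by ring,
    show 6 * k + 3 = 3 * (2 * k + 1) by ring, Wstar_two_mul (by omega), Wstar_three_mul (by omega)]

theorem W_six_mul_add_five (k : ℕ) : W 2 3 (6 * k + 5) = W 2 3 (3 * k + 2) := by
  rw [W_two_three_succ, Wstar_two_three_eq_zero (U := 6 * k + 5) (by omega) (by omega), zero_add,
    show 6 * k + 4 = 2 * (3 * k + 2) by ring, Wstar_two_mul (by omega)]

theorem W_le_W_two_mul (V : ℕ) : W 2 3 V ≤ W 2 3 (2 * V) :=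
  W_le_W_mul (by norm_num) (by norm_num) (by norm_num) (i := 1) (j := 0) (by norm_num) V

end TwoThree

def predMulTwoPow (c : ℕ) : Set ℕ := {n | ∃ a, n + 1 = c * 2 ^ a}

section predMulTwoPow

variable {c n : ℕ}

theorem mem_predMulTwoPow_iff_exists_lt : n ∈ predMulTwoPow c ↔ ∃ a < n + 1, n + 1 = c * 2 ^ a := by
  refine ⟨fun ⟨a, ha⟩ => ⟨a, ?_, ha⟩, fun ⟨a, _, ha⟩ => ⟨a, ha⟩⟩
  have hc : c ≠ 0 := by rintro rfl; simp at ha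
  calc a < 2 ^ a := Nat.lt_two_pow_self
    _ ≤ c * 2 ^ a := Nat.le_mul_of_pos_left _ (Nat.pos_of_ne_zero hc)
    _ = n + 1 := ha.symm

instance (c : ℕ) : DecidablePred (· ∈ predMulTwoPow c) :=
  fun _ => decidable_of_iff _ mem_predMulTwoPow_iff_exists_lt.symm

theorem mem_predMulTwoPow_iff (hc : 0 < c) : n ∈ predMulTwoPow c ↔ ∃ a, n = c * 2 ^ a - 1 :=
  exists_congr fun a => by
    have : 0 < c * 2 ^ a := by positivity
    omega

theorem mod_three_of_mem_predMulTwoPow (hc : 3 ∣ c) (hn : n ∈ predMulTwoPow c) : n % 3 = 2 := by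
  obtain ⟨a, ha⟩ := hn
  have : 3 ∣ n + 1 := ha ▸ hc.mul_right _
  omega

theorem two_mul_add_one_mem_predMulTwoPow_iff (hc : Odd c) :
    2 * n + 1 ∈ predMulTwoPow c ↔ n ∈ predMulTwoPow c := by
  rw [Nat.odd_iff] at hc
  refine ⟨fun ⟨a, ha⟩ => ?_, fun ⟨a, ha⟩ => ⟨a + 1, by rw [pow_succ, ← mul_assoc]; omega⟩⟩
  rcases a with _ | a
  · omega
  · exact ⟨a, by rw [pow_succ, ← mul_assoc] at ha; omega⟩

theorem two_mul_mem_predMulTwoPow_iff : 2 * n ∈ predMulTwoPow c ↔ 2 * n + 1 = c := by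
  refine ⟨fun ⟨a, ha⟩ => ?_, fun h => ⟨0, by simp [h]⟩⟩
  rcases a with _ | a
  · simpa using ha
  · rw [pow_succ, ← mul_assoc] at ha; omega

end predMulTwoPow

abbrev wOneSet : Set ℕ := {0, 1} ∪ predMulTwoPow 3

abbrev wTwoSet : Set ℕ := {3, 4, 6, 7} ∪ predMulTwoPow 9 ∪ predMulTwoPow 15

-- `wTwoSet` is tested first, so that `wClass_eq_two_iff` needs no disjointness argument.
def wClass (U : ℕ) : ℕ := if U ∈ wTwoSet then 2 else if U ∈ wOneSet then 1 else 3

section Membership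

variable {k n : ℕ}

theorem mem_wOneSet : n ∈ wOneSet ↔ n = 0 ∨ n = 1 ∨ n ∈ predMulTwoPow 3 := by
  simp [or_assoc]

theorem mem_wTwoSet : n ∈ wTwoSet ↔
    n = 3 ∨ n = 4 ∨ n = 6 ∨ n = 7 ∨ n ∈ predMulTwoPow 9 ∨ n ∈ predMulTwoPow 15 := by
  simp [or_assoc]

theorem mem_wOneSet_of_mod_three (h : n % 3 ≠ 2) : n ∈ wOneSet ↔ n = 0 ∨ n = 1 := by
  have : n ∉ predMulTwoPow 3 := fun hn => h (mod_three_of_mem_predMulTwoPow (by norm_num) hn)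
  simp [this]

theorem mem_wTwoSet_of_mod_three (h : n % 3 ≠ 2) : n ∈ wTwoSet ↔ n = 3 ∨ n = 4 ∨ n = 6 ∨ n = 7 := by
  have h₉ : n ∉ predMulTwoPow 9 := fun hn => h (mod_three_of_mem_predMulTwoPow (by norm_num) hn)
  have h₁₅ : n ∉ predMulTwoPow 15 := fun hn => h (mod_three_of_mem_predMulTwoPow (by norm_num) hn)
  simp [h₉, h₁₅]

theorem mem_wOneSet_six_mul_add_two : 6 * k + 2 ∈ wOneSet ↔ 3 * k + 1 ∈ wOneSet := by
  rw [mem_wOneSet_of_mod_three (n := 3 * k + 1) (by omega),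
    show 6 * k + 2 = 2 * (3 * k + 1) by ring]
  simp only [mem_wOneSet, two_mul_mem_predMulTwoPow_iff]
  omega

theorem mem_wTwoSet_six_mul_add_two : 6 * k + 2 ∈ wTwoSet ↔ 3 * k + 1 ∈ wTwoSet := by
  rw [mem_wTwoSet_of_mod_three (n := 3 * k + 1) (by omega),
    show 6 * k + 2 = 2 * (3 * k + 1) by ring]
  simp only [mem_wTwoSet, two_mul_mem_predMulTwoPow_iff]
  omega

theorem mem_wOneSet_six_mul_add_five : 6 * k + 5 ∈ wOneSet ↔ 3 * k + 2 ∈ wOneSet := by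
  rw [show 6 * k + 5 = 2 * (3 * k + 2) + 1 by ring]
  simp only [mem_wOneSet, two_mul_add_one_mem_predMulTwoPow_iff (by decide : Odd 3)]
  grind

theorem mem_wTwoSet_six_mul_add_five : 6 * k + 5 ∈ wTwoSet ↔ 3 * k + 2 ∈ wTwoSet := by
  rw [show 6 * k + 5 = 2 * (3 * k + 2) + 1 by ring]
  simp only [mem_wTwoSet, two_mul_add_one_mem_predMulTwoPow_iff (by decide : Odd 9),
    two_mul_add_one_mem_predMulTwoPow_iff (by decide : Odd 15)]
  grind

theorem two_mul_add_one_not_mem_wOneSet (hk : 0 < k) (h : 3 * k + 2 ∈ wOneSet) :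
    2 * k + 1 ∉ wOneSet := by
  simp only [mem_wOneSet, two_mul_add_one_mem_predMulTwoPow_iff (by decide : Odd 3)] at h ⊢
  rintro (_ | _ | ⟨b, hb⟩)
  · omega
  · omega
  obtain _ | _ | ⟨a, ha⟩ := h
  · omega
  · omega
  -- `k + 1` would equal both `2 ^ a` and `3 * 2 ^ b`.
  have : 3 ∣ 2 ^ a := ⟨2 ^ b, by omega⟩
  exact absurd (Nat.Prime.dvd_of_dvd_pow Nat.prime_three this) (by norm_num)

end Membership

section wClass

variable {k n : ℕ}

theorem wClass_pos (n : ℕ) : 0 < wClass n := by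
  unfold wClass; split_ifs <;> norm_num

theorem two_le_wClass (h : n ∉ wOneSet) : 2 ≤ wClass n := by
  unfold wClass; split_ifs <;> simp_all

theorem wClass_eq_two_iff : wClass n = 2 ↔ n ∈ wTwoSet := by
  unfold wClass; split_ifs <;> simp_all

theorem wClass_eq_three (h₃ : n % 3 ≠ 2) (h₇ : 7 < n) : wClass n = 3 := by
  have h₁ : n ∉ wOneSet := by rw [mem_wOneSet_of_mod_three h₃]; omega
  have h₂ : n ∉ wTwoSet := by rw [mem_wTwoSet_of_mod_three h₃]; omega
  simp only [wClass, if_neg h₁, if_neg h₂]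

theorem wClass_six_mul_add_two : wClass (6 * k + 2) = wClass (3 * k + 1) := by
  simp only [wClass, mem_wOneSet_six_mul_add_two, mem_wTwoSet_six_mul_add_two]

theorem wClass_six_mul_add_five : wClass (6 * k + 5) = wClass (3 * k + 2) := by
  simp only [wClass, mem_wOneSet_six_mul_add_five, mem_wTwoSet_six_mul_add_five]

end wClass

section Classification

variable {k : ℕ}

theorem min_W_six_mul_add_of_le_one {r : ℕ} (hr : r ≤ 1)
    (ih : ∀ m < 6 * k + r, min (W 2 3 m) 3 = wClass m) :
    min (W 2 3 (6 * k + r)) 3 = wClass (6 * k + r) := by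
  have hrec : W 2 3 (6 * k + r) + W 2 3 k = W 2 3 (3 * k) + W 2 3 (2 * k) := by
    interval_cases r
    exacts [W_six_mul k, W_six_mul_add_one k]
  obtain rfl | rfl | rfl | hk : k = 0 ∨ k = 1 ∨ k = 2 ∨ 3 ≤ k := by omega
  · have := W_zero (p := 2) (q := 3) (by norm_num) (by norm_num)
    have : wClass r = 1 := by interval_cases r <;> decide
    simp only [mul_zero, zero_add] at hrec ⊢
    omega
  · have := ih 1 (by omega); have := ih (3 * 1) (by omega); have := ih (2 * 1) (by omega)
    have : wClass 1 = 1 ∧ wClass (3 * 1) = 2 ∧ wClass (2 * 1) = 1 ∧ wClass (6 * 1 + r) = 2 := by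
      interval_cases r <;> decide
    omega
  · have := ih 2 (by omega); have := ih (3 * 2) (by omega); have := ih (2 * 2) (by omega)
    have : wClass 2 = 1 ∧ wClass (3 * 2) = 2 ∧ wClass (2 * 2) = 2 ∧ wClass (6 * 2 + r) = 3 := by
      interval_cases r <;> decide
    omega
  · have h := ih (3 * k) (by omega)
    rw [wClass_eq_three (by omega) (by omega)] at h ⊢
    have := W_le_W_two_mul k
    omega

theorem min_W_six_mul_add_two (ih : ∀ m < 6 * k + 2, min (W 2 3 m) 3 = wClass m) :
    min (W 2 3 (6 * k + 2)) 3 = wClass (6 * k + 2) := by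
  rw [W_six_mul_add_two, wClass_six_mul_add_two]
  exact ih _ (by omega)

theorem min_W_six_mul_add_three (ih : ∀ m < 6 * k + 3, min (W 2 3 m) 3 = wClass m) :
    min (W 2 3 (6 * k + 3)) 3 = wClass (6 * k + 3) := by
  rw [W_six_mul_add_three]
  have h₁ := ih (2 * k + 1) (by omega)
  have h₂ := ih (3 * k + 1) (by omega)
  have := wClass_pos (2 * k + 1)
  obtain rfl | hk := Nat.eq_zero_or_pos k
  · have : wClass (2 * 0 + 1) = 1 ∧ wClass (3 * 0 + 1) = 1 ∧ wClass (6 * 0 + 3) = 2 := by decide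
    omega
  · have := two_le_wClass (n := 3 * k + 1) (by rw [mem_wOneSet_of_mod_three (by omega)]; omega)
    rw [wClass_eq_three (by omega) (by omega)]
    omega

theorem min_W_six_mul_add_four (ih : ∀ m < 6 * k + 4, min (W 2 3 m) 3 = wClass m) :
    min (W 2 3 (6 * k + 4)) 3 = wClass (6 * k + 4) := by
  rw [W_six_mul_add_four]
  have h₁ := ih (3 * k + 2) (by omega)
  have h₂ := ih (2 * k + 1) (by omega)
  have := wClass_pos (3 * k + 2)
  have := wClass_pos (2 * k + 1)
  obtain rfl | hk := Nat.eq_zero_or_pos k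
  · have : wClass (3 * 0 + 2) = 1 ∧ wClass (2 * 0 + 1) = 1 ∧ wClass (6 * 0 + 4) = 2 := by decide
    omega
  · have : 2 ≤ wClass (3 * k + 2) ∨ 2 ≤ wClass (2 * k + 1) := by
      by_cases h : 3 * k + 2 ∈ wOneSet
      · exact Or.inr (two_le_wClass (two_mul_add_one_not_mem_wOneSet hk h))
      · exact Or.inl (two_le_wClass h)
    rw [wClass_eq_three (by omega) (by omega)]
    omega

theorem min_W_six_mul_add_five (ih : ∀ m < 6 * k + 5, min (W 2 3 m) 3 = wClass m) :
    min (W 2 3 (6 * k + 5)) 3 = wClass (6 * k + 5) := by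
  rw [W_six_mul_add_five, wClass_six_mul_add_five]
  exact ih _ (by omega)

theorem min_W_eq_wClass (U : ℕ) : min (W 2 3 U) 3 = wClass U := by
  induction U using Nat.strong_induction_on with
  | _ U ih =>
  obtain ⟨k, r, hr, rfl⟩ : ∃ k r, r < 6 ∧ U = 6 * k + r :=
    ⟨U / 6, U % 6, Nat.mod_lt _ (by norm_num), (Nat.div_add_mod U 6).symm⟩
  interval_cases r
  · exact min_W_six_mul_add_of_le_one (by norm_num) ih
  · exact min_W_six_mul_add_of_le_one (by norm_num) ih
  · exact min_W_six_mul_add_two ih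
  · exact min_W_six_mul_add_three ih
  · exact min_W_six_mul_add_four ih
  · exact min_W_six_mul_add_five ih

end Classification

theorem W_eq_two_iff (U : ℕ) :
    W 2 3 U = 2 ↔
      U = 3 ∨ U = 4 ∨ U = 6 ∨ U = 7 ∨
      (∃ a : ℕ, U = 9 * 2 ^ a - 1) ∨ (∃ a : ℕ, U = 15 * 2 ^ a - 1) := by
  have h := min_W_eq_wClass U
  rw [show W 2 3 U = 2 ↔ wClass U = 2 by omega, wClass_eq_two_iff, mem_wTwoSet,
    mem_predMulTwoPow_iff (by norm_num), mem_predMulTwoPow_iff (by norm_num)]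
end
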